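/- arXiv:1506.01820 — 4 statements merged into one kernel-verified Lean document; each statement's English description precedes it below -/
import Mathlib

section
/- Suppose 0 < α ≤ 1 and β > 0 are real numbers such that lim_{z→0} P(αz)/P(z) = β. Then α = 1 and β = 1. -/
/-!
If `α < 1`, restrict the ratio `P (α z) / P z` to the geometric sequence `z = αᵏ`: the values
`P (αᵏ)` then have successive ratios tending to `β > 0`, so they decay no faster than `γᵏ` for
any `γ < β`. Choosing `n` with `αⁿ < β`, this contradicts `P (αᵏ) = o(‖αᵏ‖ⁿ)`. Once `α = 1`,
the quotient is `P z / P z`, which can only tend to `β ≠ 0` if it is eventually `1`.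
-/

open Filter Topology

theorem tendsto_norm_atTop_of_ratio_test_tendsto_gt_one {E : Type*} [SeminormedAddCommGroup E]
    {f : ℕ → E} {l : ℝ} (hl : 1 < l)
    (h : Tendsto (fun n ↦ ‖f (n + 1)‖ / ‖f n‖) atTop (𝓝 l)) :
    Tendsto (fun n ↦ ‖f n‖) atTop atTop := by
  obtain ⟨r, hr₁, hrl⟩ := exists_between hl
  have hpos : ∀ᶠ n in atTop, 0 < ‖f n‖ := by
    filter_upwards [h.eventually_const_le hl] with n hn
    refine (norm_nonneg _).lt_of_ne fun h0 ↦ ?_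
    rw [← h0, div_zero] at hn
    linarith
  have hgrowth : ∀ᶠ n in atTop, 0 < ‖f n‖ ∧ r * ‖f n‖ ≤ ‖f (n + 1)‖ := by
    filter_upwards [hpos, h.eventually_const_le hrl] with n hn hratio
    exact ⟨hn, (le_div_iff₀ hn).mp hratio⟩
  obtain ⟨N, hN⟩ := eventually_atTop.mp hgrowth
  rw [← tendsto_add_atTop_iff_nat N]
  refine tendsto_atTop_of_geom_le (by simpa using (hN N le_rfl).1) hr₁ fun n ↦ ?_
  simpa [Nat.add_right_comm n 1 N] using (hN (n + N) (Nat.le_add_left N n)).2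

theorem not_tendsto_div_pow_of_ratio_tendsto {b : ℕ → ℝ} {β γ : ℝ}
    (hb : Tendsto (fun k ↦ b (k + 1) / b k) atTop (𝓝 β)) (hγ : 0 < γ) (hγβ : γ < β) :
    ¬ Tendsto (fun k ↦ b k / γ ^ k) atTop (𝓝 0) := by
  have hratio :
      Tendsto (fun k ↦ ‖b (k + 1) / γ ^ (k + 1)‖ / ‖b k / γ ^ k‖) atTop (𝓝 (β / γ)) := by
    have hnorm : Tendsto (fun k ↦ ‖b (k + 1) / b k‖ / γ) atTop (𝓝 (β / γ)) := by
      simpa [abs_of_pos (hγ.trans hγβ)] using (hb.norm.div_const γ)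
    refine hnorm.congr fun k ↦ ?_
    rw [norm_div, norm_div, norm_div, norm_pow, norm_pow, Real.norm_of_nonneg hγ.le, pow_succ]
    field_simp
  exact fun h0 ↦ not_tendsto_atTop_of_tendsto_nhds h0.norm
    (tendsto_norm_atTop_of_ratio_test_tendsto_gt_one ((one_lt_div hγ).mpr hγβ) hratio)

theorem tendsto_pow_atTop_nhdsNE_zero_of_norm_lt_one {𝕜 : Type*} [NormedDivisionRing 𝕜] {x : 𝕜}
    (hx₀ : x ≠ 0) (hx₁ : ‖x‖ < 1) : Tendsto (fun k : ℕ ↦ x ^ k) atTop (𝓝[≠] 0) :=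
  tendsto_nhdsWithin_of_tendsto_nhds_of_eventually_within _
    (tendsto_pow_atTop_nhds_zero_of_norm_lt_one hx₁) (Eventually.of_forall fun k ↦ pow_ne_zero k hx₀)

theorem eq_one_of_tendsto_div_self {X : Type*} {l : Filter X} [l.NeBot] {g : X → ℝ} {β : ℝ}
    (hβ : β ≠ 0) (h : Tendsto (fun x ↦ g x / g x) l (𝓝 β)) : β = 1 := by
  have hone : (fun x ↦ g x / g x) =ᶠ[l] fun _ ↦ 1 := by
    filter_upwards [h.eventually_ne hβ] with x hx
    exact div_self (by rintro h0; simp [h0] at hx)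
  exact tendsto_nhds_unique (h.congr' hone) tendsto_const_nhds

theorem stmt_5_general
    (P : ℂ → ℝ)
    (hflat : ∀ n : ℕ, Filter.Tendsto (fun z : ℂ => P z / ‖z‖ ^ n)
      (nhdsWithin 0 {0}ᶜ) (nhds 0))
    (α β : ℝ) (hα0 : 0 < α) (hα1 : α ≤ 1) (hβ : 0 < β)
    (hlim : Filter.Tendsto (fun z : ℂ => P ((α : ℂ) * z) / P z)
      (nhdsWithin 0 {0}ᶜ) (nhds β)) :
    α = 1 ∧ β = 1 := by
  obtain rfl : α = 1 := by
    refine hα1.eq_or_lt.resolve_right fun hα ↦ ?_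
    have hz : Tendsto (fun k : ℕ ↦ (α : ℂ) ^ k) atTop (𝓝[≠] 0) :=
      tendsto_pow_atTop_nhdsNE_zero_of_norm_lt_one (by exact_mod_cast hα0.ne')
        (by rwa [Complex.norm_real, Real.norm_of_nonneg hα0.le])
    have hratio : Tendsto (fun k ↦ P ((α : ℂ) ^ (k + 1)) / P ((α : ℂ) ^ k)) atTop (𝓝 β) := by
      simpa only [Function.comp_def, ← pow_succ'] using hlim.comp hz
    obtain ⟨n, hn⟩ := exists_pow_lt_of_lt_one hβ hα
    refine not_tendsto_div_pow_of_ratio_tendsto (b := fun k ↦ P ((α : ℂ) ^ k)) hratio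
      (pow_pos hα0 n) hn ?_
    simpa only [Function.comp_def, norm_pow, Complex.norm_real, Real.norm_of_nonneg hα0.le,
      ← pow_mul, mul_comm n] using (hflat n).comp hz
  refine ⟨rfl, eq_one_of_tendsto_div_self (l := 𝓝[≠] (0 : ℂ)) (g := P) hβ.ne' ?_⟩
  simpa using hlim

theorem stmt_5
    (P : ℂ → ℝ) (q : ℝ → ℝ) (ε₀ : ℝ)
    (hP : ContDiff ℝ (⊤ : ℕ∞) P)
    (hPq : ∀ z : ℂ, P z = q ‖z‖)
    (hq0 : q 0 = 0) (hε₀ : 0 < ε₀)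
    (hqmono : StrictMonoOn q (Set.Ico 0 ε₀))
    (hqconv : ConvexOn ℝ (Set.Ico 0 ε₀) q)
    (hflat : ∀ n : ℕ, Filter.Tendsto (fun z : ℂ => P z / ‖z‖ ^ n)
      (nhdsWithin 0 {0}ᶜ) (nhds 0))
    (α β : ℝ) (hα0 : 0 < α) (hα1 : α ≤ 1) (hβ : 0 < β)
    (hlim : Filter.Tendsto (fun z : ℂ => P ((α : ℂ) * z) / P z)
      (nhdsWithin 0 {0}ᶜ) (nhds β)) :
    α = 1 ∧ β = 1 :=
  stmt_5_general P hflat α β hα0 hα1 hβ hlim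
end

section
/- Let U be a neighborhood of (0,0) in ℂ² and U₁ a neighborhood of 0 in ℂ. Let a₀₁ ∈ ℂ \ {0}, let b₁₀ > 0 be a positive real number, and let ã₀, b̃₁ be holomorphic on {z₁ ∈ ℂ : Re z₁ < 0} ∩ U₁ and C^∞-smooth on {z₁ : Re z₁ ≤ 0} ∩ U₁, with ã₀ vanishing to order at least 2 at z₁ = 0 (i.e., ã₀(z₁) = O(|z₁|²) as z₁ → 0) and b̃₁(0) = 0. Define f₁(z₁,z₂) = a₀₁ z₁ + ã₀(z₁) and f₂(z₁,z₂) = b₁₀ z₂ + z₂ b̃₁(z₁). If f = (f₁,f₂) maps bΩ_P ∩ U into bΩ_P, i.e., Re f₁(z₁,z₂) + P(f₂(z₁,z₂)) = 0 whenever (z₁,z₂) ∈ U and Re z₁ + P(z₂) = 0, then a₀₁ = 1 and b₁₀ = 1. -/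
/-!
On the curve `t ↦ (i t, 0)` in `bΩ_P` the invariance gives `Im a₀₁ · t = Re ã₀(i t) = O(t²)`,
so `Im a₀₁ = 0`. On the curve `r ↦ (-q r, r)` it reads `q (r c(r)) = Re a₀₁ · q r + O((q r)²)` with
`c(r) = ‖b₁₀ + b̃₁(-q r)‖ → b₁₀`, so `q (r c(r)) / q r → Re a₀₁ > 0`. If `b₁₀ < 1` this gives
`q (l r) ≥ m q r` for some `l < 1`, `m > 0`, hence `q (lᵏ r) ≥ mᵏ q r`, which is impossible for a
function vanishing to infinite order (symmetrically if `b₁₀ > 1`). Once `b₁₀ = 1`,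
`c(r) = 1 + O(q r)` and `q` is Lipschitz near `0`, so the ratio also tends to `1`.
-/

open Complex Filter Topology Asymptotics Set

def FlatAtZero (q : ℝ → ℝ) : Prop :=
  ∀ n : ℕ, Tendsto (fun r => q r / r ^ n) (𝓝[>] 0) (𝓝 0)

lemma tendsto_mul_nhdsGT_zero {c : ℝ → ℝ} {b : ℝ} (hb : 0 < b)
    (hc : Tendsto c (𝓝[>] 0) (𝓝 b)) : Tendsto (fun r => r * c r) (𝓝[>] 0) (𝓝[>] 0) := by
  refine tendsto_nhdsWithin_iff.mpr ⟨?_, ?_⟩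
  · simpa using (tendsto_id.mono_left nhdsWithin_le_nhds).mul hc
  · filter_upwards [self_mem_nhdsWithin, hc.eventually (lt_mem_nhds hb)] with r hr hcr
    exact mul_pos hr hcr

namespace FlatAtZero

variable {q : ℝ → ℝ}

lemma tendsto_zero (hq : FlatAtZero q) : Tendsto q (𝓝[>] 0) (𝓝 0) := by
  simpa using hq 0

/-- Iterating the hypothesis, `q (s lᵏ) / (s lᵏ)ⁿ ≥ (m / lⁿ)ᵏ q s / sⁿ ≥ q s / sⁿ` once `lⁿ < m`. -/
lemma eventually_nonpos_of_le_comp_mul (hq : FlatAtZero q) {l m : ℝ} (hl0 : 0 < l)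
    (hl1 : l < 1) (hm : 0 < m) (h : ∀ᶠ s in 𝓝[>] 0, m * q s ≤ q (s * l)) :
    ∀ᶠ s in 𝓝[>] 0, q s ≤ 0 := by
  obtain ⟨u, hu, hsub⟩ := mem_nhdsGT_iff_exists_Ioc_subset.mp h
  obtain ⟨n, hn⟩ := exists_pow_lt_of_lt_one hm hl1
  filter_upwards [Ioc_mem_nhdsGT hu] with s hs
  have hiter : ∀ k : ℕ, m ^ k * q s ≤ q (s * l ^ k) := by
    intro k
    induction k with
    | zero => simp
    | succ k ih =>
      have hmem : s * l ^ k ∈ Ioc 0 u :=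
        ⟨by have := hs.1; positivity,
          (mul_le_of_le_one_right hs.1.le (pow_le_one₀ hl0.le hl1.le)).trans hs.2⟩
      calc m ^ (k + 1) * q s = m * (m ^ k * q s) := by ring
        _ ≤ m * q (s * l ^ k) := by gcongr
        _ ≤ q (s * l ^ k * l) := hsub hmem
        _ = q (s * l ^ (k + 1)) := by ring_nf
  by_contra! hpos
  have hs0 : 0 < s := hs.1
  have hlower : ∀ k : ℕ, q s / s ^ n ≤ q (s * l ^ k) / (s * l ^ k) ^ n := by
    intro k
    rw [div_le_div_iff₀ (by positivity) (by positivity)]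
    calc q s * (s * l ^ k) ^ n = (l ^ n) ^ k * q s * s ^ n := by ring
      _ ≤ m ^ k * q s * s ^ n := by gcongr
      _ ≤ q (s * l ^ k) * s ^ n := by gcongr; exact hiter k
  have hseq : Tendsto (fun k : ℕ => s * l ^ k) atTop (𝓝[>] 0) := by
    refine tendsto_nhdsWithin_iff.mpr
      ⟨?_, Eventually.of_forall fun k => mem_Ioi.mpr (by positivity)⟩
    simpa using (tendsto_pow_atTop_nhds_zero_of_lt_one hl0.le hl1).const_mul s
  have hlim := ge_of_tendsto ((hq n).comp hseq) (Eventually.of_forall hlower)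
  exact (div_pos hpos (pow_pos hs0 n)).not_ge hlim

lemma eventually_nonpos_of_comp_mul_le (hq : FlatAtZero q) {Λ K : ℝ} (hΛ : 1 < Λ)
    (hK : 0 < K) (h : ∀ᶠ r in 𝓝[>] 0, q (r * Λ) ≤ K * q r) :
    ∀ᶠ s in 𝓝[>] 0, q s ≤ 0 := by
  have hΛ0 : 0 < Λ := one_pos.trans hΛ
  refine hq.eventually_nonpos_of_le_comp_mul (l := Λ⁻¹) (m := K⁻¹) (inv_pos.mpr hΛ0)
    (inv_lt_one_of_one_lt₀ hΛ) (inv_pos.mpr hK) ?_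
  filter_upwards [(tendsto_mul_nhdsGT_zero (inv_pos.mpr hΛ0) tendsto_const_nhds).eventually h]
    with s hs
  rwa [inv_mul_cancel_right₀ hΛ0.ne', ← inv_mul_le_iff₀ hK] at hs

variable {c : ℝ → ℝ} {b A ε : ℝ}

lemma le_one_of_tendsto_comp_mul_div (hq : FlatAtZero q) (hε : 0 < ε)
    (hmono : MonotoneOn q (Ioo 0 ε)) (hpos : ∀ᶠ r in 𝓝[>] 0, 0 < q r) (hb : 0 < b)
    (hc : Tendsto c (𝓝[>] 0) (𝓝 b)) (hA : 0 < A)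
    (hratio : Tendsto (fun r => q (r * c r) / q r) (𝓝[>] 0) (𝓝 A)) : b ≤ 1 := by
  by_contra! hb1
  have hΛ : 1 < (1 + b) / 2 := by linarith
  have hle : ∀ᶠ r in 𝓝[>] 0, q (r * ((1 + b) / 2)) ≤ (A + 1) * q r := by
    filter_upwards [self_mem_nhdsWithin, hpos,
      hc.eventually_const_le (by linarith : (1 + b) / 2 < b),
      hratio.eventually_le_const (lt_add_one A),
      (tendsto_mul_nhdsGT_zero (c := fun _ => (1 + b) / 2) (by linarith)
        tendsto_const_nhds).eventually (Ioo_mem_nhdsGT hε),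
      (tendsto_mul_nhdsGT_zero hb hc).eventually (Ioo_mem_nhdsGT hε)]
      with r hr hqr hcr hrat hΛmem hcmem
    calc q (r * ((1 + b) / 2)) ≤ q (r * c r) :=
          hmono hΛmem hcmem (mul_le_mul_of_nonneg_left hcr (le_of_lt hr))
      _ ≤ (A + 1) * q r := (div_le_iff₀ hqr).mp hrat
  obtain ⟨r, hr0, hr⟩ :=
    ((hq.eventually_nonpos_of_comp_mul_le hΛ (by linarith) hle).and hpos).exists
  linarith

lemma one_le_of_tendsto_comp_mul_div (hq : FlatAtZero q) (hε : 0 < ε)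
    (hmono : MonotoneOn q (Ioo 0 ε)) (hpos : ∀ᶠ r in 𝓝[>] 0, 0 < q r) (hb : 0 < b)
    (hc : Tendsto c (𝓝[>] 0) (𝓝 b)) (hA : 0 < A)
    (hratio : Tendsto (fun r => q (r * c r) / q r) (𝓝[>] 0) (𝓝 A)) : 1 ≤ b := by
  by_contra! hb1
  have hge : ∀ᶠ r in 𝓝[>] 0, A / 2 * q r ≤ q (r * ((1 + b) / 2)) := by
    filter_upwards [self_mem_nhdsWithin, hpos,
      hc.eventually_le_const (by linarith : b < (1 + b) / 2),
      hratio.eventually_const_le (half_lt_self hA),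
      (tendsto_mul_nhdsGT_zero (c := fun _ => (1 + b) / 2) (by linarith)
        tendsto_const_nhds).eventually (Ioo_mem_nhdsGT hε),
      (tendsto_mul_nhdsGT_zero hb hc).eventually (Ioo_mem_nhdsGT hε)]
      with r hr hqr hcr hrat hlmem hcmem
    calc A / 2 * q r ≤ q (r * c r) := (le_div_iff₀ hqr).mp hrat
      _ ≤ q (r * ((1 + b) / 2)) :=
          hmono hcmem hlmem (mul_le_mul_of_nonneg_left hcr (le_of_lt hr))
  obtain ⟨r, hr0, hr⟩ := ((hq.eventually_nonpos_of_le_comp_mul (by linarith) (by linarith)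
    (half_pos hA) hge).and hpos).exists
  linarith

end FlatAtZero

variable {q c : ℝ → ℝ} {b A : ℝ}

lemma pos_of_tendsto_comp_mul_div (hpos : ∀ᶠ r in 𝓝[>] 0, 0 < q r) (hb : 0 < b)
    (hc : Tendsto c (𝓝[>] 0) (𝓝 b)) (hA : A ≠ 0)
    (hratio : Tendsto (fun r => q (r * c r) / q r) (𝓝[>] 0) (𝓝 A)) : 0 < A := by
  refine lt_of_le_of_ne (ge_of_tendsto hratio ?_) hA.symm
  filter_upwards [hpos, (tendsto_mul_nhdsGT_zero hb hc).eventually hpos] with r hqr hqrc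
  positivity

lemma tendsto_comp_mul_div_self_of_lipschitzOnWith {K : NNReal} {s : Set ℝ}
    (hlip : LipschitzOnWith K q s) (hs : s ∈ 𝓝[>] 0) (hc : Tendsto c (𝓝[>] 0) (𝓝 1))
    (hcq : (fun r => c r - 1) =O[𝓝[>] 0] q) (hpos : ∀ᶠ r in 𝓝[>] 0, q r ≠ 0) :
    Tendsto (fun r => q (r * c r) / q r) (𝓝[>] 0) (𝓝 1) := by
  have hdiff : (fun r => q (r * c r) - q r) =O[𝓝[>] 0] fun r => r * (c r - 1) := by
    refine IsBigO.of_bound K ?_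
    filter_upwards [hs, (tendsto_mul_nhdsGT_zero one_pos hc).eventually hs] with r hr hrc
    simpa [Real.dist_eq, mul_sub] using hlip.dist_le_mul _ hrc _ hr
  have hsmall : (fun r => r * (c r - 1)) =o[𝓝[>] 0] q := by
    simpa using ((isLittleO_one_iff ℝ).mpr
      (tendsto_id.mono_left nhdsWithin_le_nhds)).mul_isBigO hcq
  rw [← tendsto_sub_nhds_zero_iff]
  refine (hdiff.trans_isLittleO hsmall).tendsto_div_nhds_zero.congr' ?_
  filter_upwards [hpos] with r hr
  rw [sub_div, div_self hr]

lemma flatAtZero_of_radial {P : ℂ → ℝ} (hPq : ∀ z, P z = q ‖z‖)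
    (hflat : ∀ n : ℕ, Tendsto (fun z : ℂ => P z / ‖z‖ ^ n) (𝓝[≠] 0) (𝓝 0)) : FlatAtZero q := by
  have hmap : Tendsto (fun r : ℝ => (r : ℂ)) (𝓝[>] 0) (𝓝[≠] 0) := by
    refine tendsto_nhdsWithin_iff.mpr ⟨?_, ?_⟩
    · simpa using (continuous_ofReal.tendsto 0).mono_left nhdsWithin_le_nhds
    · filter_upwards [self_mem_nhdsWithin] with r hr
      simpa using hr.ne'
  intro n
  refine ((hflat n).comp hmap).congr' ?_
  filter_upwards [self_mem_nhdsWithin] with r hr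
  simp [hPq, abs_of_pos (mem_Ioi.mp hr)]

lemma exists_lipschitzOnWith_of_radial {P : ℂ → ℝ} (hP : ContDiffAt ℝ 1 P 0)
    (hPq : ∀ z, P z = q ‖z‖) : ∃ K, ∃ s ∈ 𝓝[>] (0 : ℝ), LipschitzOnWith K q s := by
  obtain ⟨K, t, ht, hlip⟩ := (ContDiffAt.comp (0 : ℝ) (by simpa using hP)
    ofRealCLM.contDiff.contDiffAt).exists_lipschitzOnWith
  refine ⟨K, Ioi 0 ∩ t, inter_mem_nhdsWithin _ ht, fun x hx y hy => ?_⟩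
  simpa [hPq, abs_of_pos (mem_Ioi.mp hx.1), abs_of_pos (mem_Ioi.mp hy.1)] using hlip hx.2 hy.2

lemma tendsto_neg_ofReal_nhdsWithin_re_nonpos {α : Type*} {l : Filter α} {f : α → ℝ}
    (hf : Tendsto f l (𝓝 0)) (hf0 : ∀ᶠ x in l, 0 ≤ f x) :
    Tendsto (fun x => -(f x : ℂ)) l (𝓝[{z | z.re ≤ 0}] 0) := by
  refine tendsto_nhdsWithin_iff.mpr
    ⟨by simpa using ((continuous_ofReal.tendsto 0).comp hf).neg, ?_⟩
  filter_upwards [hf0] with x hx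
  simpa using hx

lemma isBigO_comp_neg_ofReal {α : Type*} {l : Filter α} {f : α → ℝ} {g : ℂ → ℂ}
    (hg : DifferentiableWithinAt ℝ g {z | z.re ≤ 0} 0) (hg0 : g 0 = 0)
    (hf : Tendsto f l (𝓝 0)) (hf0 : ∀ᶠ x in l, 0 ≤ f x) :
    (fun x => g (-(f x : ℂ))) =O[l] f := by
  have hgO : g =O[𝓝[{z : ℂ | z.re ≤ 0}] 0] fun z => z := by
    simpa only [hg0, sub_zero] using hg.hasFDerivWithinAt.isBigO_sub
  exact (hgO.comp_tendsto (tendsto_neg_ofReal_nhdsWithin_re_nonpos hf hf0)).trans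
    (isBigO_of_le _ fun x => by simp)

lemma im_eq_zero_of_re_mul_I_add_eq_zero {a : ℂ} {g : ℂ → ℂ}
    (hg : g =O[𝓝[{z | z.re ≤ 0}] 0] fun z => ‖z‖ ^ 2)
    (h : ∀ᶠ t : ℝ in 𝓝 0, (a * (t * I) + g (t * I)).re = 0) : a.im = 0 := by
  have hψ : Tendsto (fun t : ℝ => (t : ℂ) * I) (𝓝 0) (𝓝[{z | z.re ≤ 0}] 0) :=
    tendsto_nhdsWithin_iff.mpr ⟨by simpa using (continuous_ofReal.tendsto 0).mul_const I,
      Eventually.of_forall fun t => by simp⟩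
  have hO : (fun t : ℝ => a.im * t) =O[𝓝 0] fun t => t ^ 2 := by
    refine ((reCLM.isBigO_comp _ _).trans ((hg.comp_tendsto hψ).trans
      (isBigO_of_le _ fun t => by simp))).congr' ?_ EventuallyEq.rfl
    filter_upwards [h] with t ht
    simp only [add_re, mul_re, mul_im, ofReal_re, I_re, ofReal_im, I_im] at ht
    simp only [reCLM_apply, Function.comp_apply]
    linarith
  have hlim := ((hO.trans_isLittleO (isLittleO_pow_id one_lt_two)).tendsto_div_nhds_zero).mono_left
    (nhdsWithin_le_nhds (s := {0}ᶜ))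
  refine tendsto_nhds_unique (tendsto_const_nhds.congr' ?_) hlim
  filter_upwards [self_mem_nhdsWithin] with t ht
  exact (mul_div_cancel_right₀ _ ht).symm

lemma im_eq_zero_of_mapsTo_boundary {P : ℂ → ℝ} (hPq : ∀ z, P z = q ‖z‖) (hq0 : q 0 = 0)
    {U : Set (ℂ × ℂ)} (hU : U ∈ 𝓝 (0, 0)) {a₀₁ : ℂ} {b₁₀ : ℝ} {a₀ b₁ : ℂ → ℂ}
    (ha₀ : a₀ =O[𝓝[{z | z.re ≤ 0}] 0] fun z => ‖z‖ ^ 2)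
    (hbdry : ∀ p : ℂ × ℂ, p ∈ U → p.1.re + P p.2 = 0 →
      (a₀₁ * p.1 + a₀ p.1).re + P ((b₁₀ : ℂ) * p.2 + p.2 * b₁ p.1) = 0) :
    a₀₁.im = 0 := by
  refine im_eq_zero_of_re_mul_I_add_eq_zero ha₀ ?_
  have hcurve : ∀ᶠ t : ℝ in 𝓝 0, ((t : ℂ) * I, (0 : ℂ)) ∈ U :=
    ((by simpa using (continuous_ofReal.tendsto 0).mul_const I :
      Tendsto (fun t : ℝ => (t : ℂ) * I) (𝓝 0) (𝓝 0)).prodMk_nhds tendsto_const_nhds).eventually hU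
  filter_upwards [hcurve] with t ht
  simpa [hPq, hq0] using hbdry _ ht (by simp [hPq, hq0])

lemma tendsto_comp_mul_div_of_mapsTo_boundary {P : ℂ → ℝ} (hPq : ∀ z, P z = q ‖z‖)
    (hq : Tendsto q (𝓝[>] 0) (𝓝 0)) (hpos : ∀ᶠ r in 𝓝[>] 0, 0 < q r)
    {U : Set (ℂ × ℂ)} (hU : U ∈ 𝓝 (0, 0)) {a₀₁ : ℂ} {b₁₀ : ℝ} {a₀ b₁ : ℂ → ℂ}
    (ha₀ : a₀ =O[𝓝[{z | z.re ≤ 0}] 0] fun z => ‖z‖ ^ 2)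
    (hbdry : ∀ p : ℂ × ℂ, p ∈ U → p.1.re + P p.2 = 0 →
      (a₀₁ * p.1 + a₀ p.1).re + P ((b₁₀ : ℂ) * p.2 + p.2 * b₁ p.1) = 0) :
    Tendsto (fun r => q (r * ‖(b₁₀ : ℂ) + b₁ (-(q r : ℂ))‖) / q r) (𝓝[>] 0) (𝓝 a₀₁.re) := by
  have hφ := tendsto_neg_ofReal_nhdsWithin_re_nonpos hq (hpos.mono fun r hr => hr.le)
  have hcurve : ∀ᶠ r in 𝓝[>] 0, (-(q r : ℂ), (r : ℂ)) ∈ U := by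
    refine Tendsto.eventually (f := fun r : ℝ => (-(q r : ℂ), (r : ℂ))) ?_ hU
    refine (hφ.mono_right nhdsWithin_le_nhds).prodMk_nhds ?_
    simpa using (continuous_ofReal.tendsto 0).mono_left nhdsWithin_le_nhds
  have hrel : ∀ᶠ r in 𝓝[>] 0,
      q (r * ‖(b₁₀ : ℂ) + b₁ (-(q r : ℂ))‖) = a₀₁.re * q r - (a₀ (-(q r : ℂ))).re := by
    filter_upwards [self_mem_nhdsWithin, hcurve] with r hr hrU
    have h := hbdry _ hrU (by simp [hPq, abs_of_pos (mem_Ioi.mp hr)])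
    rw [hPq, show (b₁₀ : ℂ) * r + r * b₁ (-(q r : ℂ)) = r * (b₁₀ + b₁ (-(q r : ℂ))) by ring,
      norm_mul, norm_real, Real.norm_of_nonneg (le_of_lt hr)] at h
    simp only [add_re, mul_re, neg_re, ofReal_re, neg_im, ofReal_im] at h
    linarith
  have ha₀q : (fun r => (a₀ (-(q r : ℂ))).re) =o[𝓝[>] 0] q :=
    (reCLM.isBigO_comp _ _).trans_isLittleO
      (((ha₀.trans_isLittleO ((isLittleO_norm_pow_id one_lt_two).mono
        nhdsWithin_le_nhds)).comp_tendsto hφ).trans_isBigO (isBigO_of_le _ fun r => by simp))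
  have hlim := (tendsto_const_nhds (x := a₀₁.re)).sub ha₀q.tendsto_div_nhds_zero
  rw [sub_zero] at hlim
  refine hlim.congr' ?_
  filter_upwards [hrel, hpos] with r hr hqr
  rw [hr]
  field_simp

theorem stmt_6_general
    (P : ℂ → ℝ) (q : ℝ → ℝ) (ε₀ : ℝ)
    (hP : ContDiff ℝ (⊤ : ℕ∞) P)
    (hPq : ∀ z : ℂ, P z = q (‖z‖))
    (hq0 : q 0 = 0) (hε₀ : 0 < ε₀)
    (hqmono : StrictMonoOn q (Set.Ico 0 ε₀))
    (hflat : ∀ n : ℕ, Filter.Tendsto (fun z : ℂ => P z / ‖z‖ ^ n)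
      (nhdsWithin 0 {0}ᶜ) (nhds 0))
    (U : Set (ℂ × ℂ)) (hUopen : IsOpen U) (hU0 : ((0 : ℂ), (0 : ℂ)) ∈ U)
    (U₁ : Set ℂ) (hU₁open : IsOpen U₁) (hU₁0 : (0 : ℂ) ∈ U₁)
    (a₀₁ : ℂ) (ha₀₁ : a₀₁ ≠ 0) (b₁₀ : ℝ) (hb₁₀ : 0 < b₁₀)
    (a₀ b₁ : ℂ → ℂ)
    (hb₁sm : ContDiffOn ℝ (⊤ : ℕ∞) b₁ ({z : ℂ | z.re ≤ 0} ∩ U₁))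
    (ha₀ord : Asymptotics.IsBigO (nhdsWithin 0 {z : ℂ | z.re ≤ 0}) a₀
      (fun z : ℂ => ‖z‖ ^ 2))
    (hb₁0 : b₁ 0 = 0)
    (hbdry : ∀ p : ℂ × ℂ, p ∈ U → p.1.re + P p.2 = 0 →
      (a₀₁ * p.1 + a₀ p.1).re + P ((b₁₀ : ℂ) * p.2 + p.2 * b₁ p.1) = 0) :
    a₀₁ = 1 ∧ b₁₀ = 1 := by
  have hq : FlatAtZero q := flatAtZero_of_radial hPq hflat
  have hpos : ∀ᶠ r in 𝓝[>] 0, 0 < q r := by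
    filter_upwards [Ioo_mem_nhdsGT hε₀] with r hr
    simpa [hq0] using hqmono ⟨le_rfl, hε₀⟩ ⟨hr.1.le, hr.2⟩ hr.1
  have hU : U ∈ 𝓝 (0, 0) := hUopen.mem_nhds hU0
  have him : a₀₁.im = 0 := im_eq_zero_of_mapsTo_boundary hPq hq0 hU ha₀ord hbdry
  have hratio := tendsto_comp_mul_div_of_mapsTo_boundary hPq hq.tendsto_zero hpos hU ha₀ord hbdry
  have hb₁q : (fun r => b₁ (-(q r : ℂ))) =O[𝓝[>] 0] q :=
    isBigO_comp_neg_ofReal ((differentiableWithinAt_inter (hU₁open.mem_nhds hU₁0)).mp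
      (hb₁sm.differentiableOn (by simp) 0 ⟨by simp, hU₁0⟩)) hb₁0 hq.tendsto_zero
      (hpos.mono fun r hr => hr.le)
  have hc : Tendsto (fun r => ‖(b₁₀ : ℂ) + b₁ (-(q r : ℂ))‖) (𝓝[>] 0) (𝓝 b₁₀) := by
    simpa [abs_of_pos hb₁₀] using
      ((tendsto_const_nhds (x := (b₁₀ : ℂ))).add (hb₁q.trans_tendsto hq.tendsto_zero)).norm
  have hA : 0 < a₀₁.re :=
    pos_of_tendsto_comp_mul_div hpos hb₁₀ hc (fun h => ha₀₁ (Complex.ext h him)) hratio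
  have hmono : MonotoneOn q (Ioo 0 ε₀) := hqmono.monotoneOn.mono Ioo_subset_Ico_self
  obtain rfl : b₁₀ = 1 := le_antisymm
    (hq.le_one_of_tendsto_comp_mul_div hε₀ hmono hpos hb₁₀ hc hA hratio)
    (hq.one_le_of_tendsto_comp_mul_div hε₀ hmono hpos hb₁₀ hc hA hratio)
  obtain ⟨K, s, hs, hlip⟩ := exists_lipschitzOnWith_of_radial (hP.contDiffAt.of_le (by simp)) hPq
  have hcq : (fun r => ‖((1 : ℝ) : ℂ) + b₁ (-(q r : ℂ))‖ - 1) =O[𝓝[>] 0] q := by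
    refine (isBigO_of_le _ fun r => ?_).trans hb₁q
    simpa using abs_norm_sub_norm_le (1 + b₁ (-(q r : ℂ))) 1
  have hA1 : a₀₁.re = 1 := tendsto_nhds_unique hratio
    (tendsto_comp_mul_div_self_of_lipschitzOnWith hlip hs hc hcq (hpos.mono fun r hr => hr.ne'))
  exact ⟨Complex.ext (by simpa using hA1) (by simpa using him), rfl⟩

theorem stmt_6
    (P : ℂ → ℝ) (q : ℝ → ℝ) (ε₀ : ℝ)
    (hP : ContDiff ℝ (⊤ : ℕ∞) P)
    (hPq : ∀ z : ℂ, P z = q (‖z‖))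
    (hq0 : q 0 = 0) (hε₀ : 0 < ε₀)
    (hqmono : StrictMonoOn q (Set.Ico 0 ε₀))
    (hqconv : ConvexOn ℝ (Set.Ico 0 ε₀) q)
    (hflat : ∀ n : ℕ, Filter.Tendsto (fun z : ℂ => P z / ‖z‖ ^ n)
      (nhdsWithin 0 {0}ᶜ) (nhds 0))
    (U : Set (ℂ × ℂ)) (hUopen : IsOpen U) (hU0 : ((0 : ℂ), (0 : ℂ)) ∈ U)
    (U₁ : Set ℂ) (hU₁open : IsOpen U₁) (hU₁0 : (0 : ℂ) ∈ U₁)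
    (a₀₁ : ℂ) (ha₀₁ : a₀₁ ≠ 0) (b₁₀ : ℝ) (hb₁₀ : 0 < b₁₀)
    (a₀ b₁ : ℂ → ℂ)
    (ha₀hol : DifferentiableOn ℂ a₀ ({z : ℂ | z.re < 0} ∩ U₁))
    (ha₀sm : ContDiffOn ℝ (⊤ : ℕ∞) a₀ ({z : ℂ | z.re ≤ 0} ∩ U₁))
    (hb₁hol : DifferentiableOn ℂ b₁ ({z : ℂ | z.re < 0} ∩ U₁))
    (hb₁sm : ContDiffOn ℝ (⊤ : ℕ∞) b₁ ({z : ℂ | z.re ≤ 0} ∩ U₁))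
    (ha₀ord : Asymptotics.IsBigO (nhdsWithin 0 {z : ℂ | z.re ≤ 0}) a₀
      (fun z : ℂ => ‖z‖ ^ 2))
    (hb₁0 : b₁ 0 = 0)
    (hbdry : ∀ p : ℂ × ℂ, p ∈ U → p.1.re + P p.2 = 0 →
      (a₀₁ * p.1 + a₀ p.1).re + P ((b₁₀ : ℂ) * p.2 + p.2 * b₁ p.1) = 0) :
    a₀₁ = 1 ∧ b₁₀ = 1 :=
  stmt_6_general P q ε₀ hP hPq hq0 hε₀ hqmono hflat U hUopen hU0 U₁ hU₁open hU₁0 a₀₁ ha₀₁ b₁₀ hb₁₀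
    a₀ b₁ hb₁sm ha₀ord hb₁0 hbdry
end

section
/- Let 0 < r < ε₀ and set U = {(z₁,z₂) ∈ ℂ² : |z₁| < r, |z₂| < r}. Let δ ∈ ℝ and let g be holomorphic on Ω_P ∩ U with g not identically zero, satisfying g(z₁,z₂) = e^{iδt}·g(z₁, e^{it}z₂) for all (z₁,z₂) ∈ Ω_P ∩ U and all t ∈ ℝ. Then there exist n ∈ ℕ and a holomorphic function b on {z₁ ∈ ℂ : Re z₁ < 0, |z₁| < r}, not identically zero, such that δ = −n and g(z₁,z₂) = b(z₁)·z₂ⁿ for all (z₁,z₂) ∈ Ω_P ∩ U. -/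
/-!
On a slice `f w = g (z₁, w)` the rotation identity reads `f w = e^{iδt} f (e^{it} w)`; taking
`k` derivatives at `0` gives `f⁽ᵏ⁾(0) = e^{i(δ+k)t} f⁽ᵏ⁾(0)` for every `t`, so `f⁽ᵏ⁾(0) ≠ 0`
forces `δ = -k`. Hence a nonzero slice has exactly one nonvanishing Taylor coefficient at `0`,
the `n`-th with `δ = -n`, and since the slices are star-shaped about `0` (`q` is increasing) the
identity theorem gives `g (z₁, w) = b z₁ * wⁿ` with `b z₁ = f⁽ⁿ⁾(0) / n!`. Near any `z₁`,
`b z = g (z, w₀) / w₀ⁿ` for a fixed small `w₀ ≠ 0`, so `b` is holomorphic.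
-/

open Complex Metric Set Filter Topology Nat

lemma eq_zero_of_forall_exp_mul_I_eq_one {a : ℝ} (h : ∀ t : ℝ, exp (a * t * I) = 1) : a = 0 := by
  by_contra ha
  have ha' : (a : ℂ) ≠ 0 := ofReal_ne_zero.mpr ha
  have h_half_turn := h (Real.pi / a)
  rw [show (a : ℂ) * (Real.pi / a : ℝ) * I = Real.pi * I by push_cast; field_simp,
    exp_pi_mul_I] at h_half_turn
  norm_num at h_half_turn

section OneVariable

variable {f : ℂ → ℂ} {S : Set ℂ} {δ : ℝ}

lemma iteratedDeriv_eq_mul_pow_mul {ρ : ℝ} (hρ : 0 < ρ) (hf : DifferentiableOn ℂ f (ball 0 ρ))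
    {E c : ℂ} (hc : ‖c‖ = 1) (h : ∀ w ∈ ball (0 : ℂ) ρ, f w = E * f (c * w)) (k : ℕ) :
    iteratedDeriv k f 0 = E * c ^ k * iteratedDeriv k f 0 := by
  have hmaps : MapsTo (c * ·) (ball (0 : ℂ) ρ) (ball 0 ρ) := fun w hw => by simpa [hc] using hw
  have h0 : (0 : ℂ) ∈ ball 0 ρ := mem_ball_self hρ
  calc iteratedDeriv k f 0 = E * iteratedDeriv k (fun w => f (c * w)) 0 := by
        rw [EventuallyEq.iteratedDeriv_eq k (eventually_of_mem (ball_mem_nhds 0 hρ) h),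
          iteratedDeriv_const_mul_field]
    _ = E * c ^ k * iteratedDeriv k f 0 := by
        rw [← iteratedDerivWithin_of_isOpen isOpen_ball h0,
          iteratedDerivWithin_comp_const_smul h0 isOpen_ball.uniqueDiffOn
            (hf.contDiffOn isOpen_ball) c hmaps, mul_zero,
          iteratedDerivWithin_of_isOpen isOpen_ball h0, smul_eq_mul, mul_assoc]

lemma eq_neg_natCast_of_iteratedDeriv_ne_zero (hS : IsOpen S) (h0 : 0 ∈ S)
    (hf : DifferentiableOn ℂ f S)
    (hrot : ∀ w ∈ S, ∀ t : ℝ, f w = exp (I * δ * t) * f (exp (I * t) * w)) {k : ℕ}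
    (hk : iteratedDeriv k f 0 ≠ 0) : δ = -k := by
  obtain ⟨ρ, hρ, hball⟩ := isOpen_iff.mp hS 0 h0
  suffices ∀ t : ℝ, exp ((δ + k : ℝ) * t * I) = 1 by
    linarith [eq_zero_of_forall_exp_mul_I_eq_one this]
  intro t
  have hc : ‖exp (I * t)‖ = 1 := by rw [mul_comm, norm_exp_ofReal_mul_I]
  have := iteratedDeriv_eq_mul_pow_mul hρ (hf.mono hball) hc
    (fun w hw => hrot w (hball hw) t) k
  rw [← exp_nat_mul, ← exp_add] at this
  rw [← (mul_eq_right₀ hk).mp this.symm]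
  push_cast
  ring_nf

lemma eqOn_monomial_of_iteratedDeriv_eq_zero (hS : IsOpen S) (hS' : IsPreconnected S)
    (h0 : 0 ∈ S) (hf : DifferentiableOn ℂ f S) {k : ℕ}
    (h : ∀ j ≠ k, iteratedDeriv j f 0 = 0) :
    EqOn f (fun w => (k ! : ℂ)⁻¹ * iteratedDeriv k f 0 * w ^ k) S := by
  obtain ⟨ρ, hρ, hball⟩ := isOpen_iff.mp hS 0 h0
  have h_taylor : EqOn f (fun w => (k ! : ℂ)⁻¹ * iteratedDeriv k f 0 * w ^ k) (ball 0 ρ) := by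
    intro w hw
    rw [← taylorSeries_eq_on_ball' hw (hf.mono hball)]
    refine (tsum_eq_single k fun j hj => ?_).trans (by simp)
    simp [h j hj]
  refine (hf.analyticOnNhd hS).eqOn_of_preconnected_of_eventuallyEq ?_ hS' h0
    (eventually_of_mem (ball_mem_nhds 0 hρ) h_taylor)
  exact (Differentiable.differentiableOn (by fun_prop)).analyticOnNhd hS

end OneVariable

section Rotation

variable {Ω : Set (ℂ × ℂ)} {g : ℂ × ℂ → ℂ} {δ : ℝ}

lemma mk_zero_mem_of_starConvex (hstar : ∀ z, StarConvex ℝ 0 (Prod.mk z ⁻¹' Ω)) {p : ℂ × ℂ}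
    (hp : p ∈ Ω) : (p.1, 0) ∈ Ω := by
  simpa using starConvex_zero_iff.mp (hstar p.1) (show p.2 ∈ Prod.mk p.1 ⁻¹' Ω from hp)
    (le_refl (0 : ℝ)) zero_le_one

lemma differentiableOn_slice (hg : DifferentiableOn ℂ g Ω) (z : ℂ) :
    DifferentiableOn ℂ (fun w => g (z, w)) (Prod.mk z ⁻¹' Ω) :=
  hg.comp (differentiableOn_const z |>.prodMk differentiableOn_id) fun _ hw => hw

variable (hΩ : IsOpen Ω) (hstar : ∀ z, StarConvex ℝ 0 (Prod.mk z ⁻¹' Ω))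
  (hg : DifferentiableOn ℂ g Ω)
  (hrot : ∀ p ∈ Ω, ∀ t : ℝ, g p = exp (I * δ * t) * g (p.1, exp (I * t) * p.2))
include hΩ hstar hg hrot

lemma exists_eq_neg_natCast_of_rotation (hne : ∃ p ∈ Ω, g p ≠ 0) : ∃ n : ℕ, δ = -n := by
  obtain ⟨p, hp, hgp⟩ := hne
  have hS := hΩ.preimage (Continuous.prodMk_right p.1)
  have h0 : (0 : ℂ) ∈ Prod.mk p.1 ⁻¹' Ω := mk_zero_mem_of_starConvex hstar hp
  by_contra! hδ
  have hvanish : ∀ j, iteratedDeriv j (fun w => g (p.1, w)) 0 = 0 := fun j => by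
    by_contra hj
    exact hδ j (eq_neg_natCast_of_iteratedDeriv_ne_zero hS h0 (differentiableOn_slice hg p.1)
      (fun w hw t => hrot _ hw t) hj)
  apply hgp
  simpa [hvanish 0] using eqOn_monomial_of_iteratedDeriv_eq_zero (k := 0) hS
    ((hstar p.1).isPathConnected h0).isConnected.isPreconnected h0
    (differentiableOn_slice hg p.1) (fun j _ => hvanish j) (show p.2 ∈ Prod.mk p.1 ⁻¹' Ω from hp)

lemma eq_mul_pow_of_rotation {n : ℕ} (hδ : δ = -n) :
    ∀ p ∈ Ω, g p = (n ! : ℂ)⁻¹ * iteratedDeriv n (fun w => g (p.1, w)) 0 * p.2 ^ n := by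
  intro p hp
  have hS := hΩ.preimage (Continuous.prodMk_right p.1)
  have h0 : (0 : ℂ) ∈ Prod.mk p.1 ⁻¹' Ω := mk_zero_mem_of_starConvex hstar hp
  refine eqOn_monomial_of_iteratedDeriv_eq_zero hS
    ((hstar p.1).isPathConnected h0).isConnected.isPreconnected h0
    (differentiableOn_slice hg p.1) (fun j hj => ?_) (show p.2 ∈ Prod.mk p.1 ⁻¹' Ω from hp)
  by_contra hj'
  have := eq_neg_natCast_of_iteratedDeriv_ne_zero hS h0 (differentiableOn_slice hg p.1)
    (fun w hw t => hrot _ hw t) hj'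
  exact hj (by exact_mod_cast neg_injective (this.symm.trans hδ))

end Rotation

lemma differentiableAt_of_eq_mul_pow {Ω : Set (ℂ × ℂ)} {g : ℂ × ℂ → ℂ} (hΩ : IsOpen Ω)
    (hg : DifferentiableOn ℂ g Ω) {b : ℂ → ℂ} {n : ℕ} (hb : ∀ p ∈ Ω, g p = b p.1 * p.2 ^ n)
    {z : ℂ} (hz : (z, 0) ∈ Ω) : DifferentiableAt ℂ b z := by
  have h_punctured : ∀ᶠ w in 𝓝[≠] (0 : ℂ), (z, w) ∈ Ω ∧ w ≠ 0 :=
    (eventually_nhdsWithin_of_eventually_nhds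
      ((hΩ.preimage (Continuous.prodMk_right z)).mem_nhds hz)).and self_mem_nhdsWithin
  obtain ⟨w, hwΩ, hw0⟩ := h_punctured.exists
  have hb_near : (fun z' => g (z', w) / w ^ n) =ᶠ[𝓝 z] b := by
    filter_upwards [(hΩ.preimage (Continuous.prodMk_left w)).mem_nhds hwΩ] with z' hz'
    rw [hb _ hz']
    field_simp
  exact (((hg.differentiableAt (hΩ.mem_nhds hwΩ)).comp z
    (differentiableAt_id.prodMk (differentiableAt_const w))).div_const _).congr_of_eventuallyEq
    hb_near.symm

section ModelDomain

/-- The domain `Ω_P ∩ U` of the paper. -/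
def modelDomain (P : ℂ → ℝ) (r : ℝ) : Set (ℂ × ℂ) :=
  {p : ℂ × ℂ | p.1.re + P p.2 < 0} ∩ {p : ℂ × ℂ | ‖p.1‖ < r ∧ ‖p.2‖ < r}

variable {P : ℂ → ℝ} {r : ℝ}

lemma isOpen_modelDomain (hP : Continuous P) : IsOpen (modelDomain P r) := by
  refine (isOpen_lt (by fun_prop) continuous_const).inter ?_
  simp only [Set.ofPred_and]
  exact (isOpen_lt (by fun_prop) continuous_const).inter (isOpen_lt (by fun_prop) continuous_const)

lemma mk_zero_mem_modelDomain_iff (hP0 : P 0 = 0) (hr : 0 < r) {z : ℂ} :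
    (z, 0) ∈ modelDomain P r ↔ z.re < 0 ∧ ‖z‖ < r := by
  simp [modelDomain, hP0, hr]

lemma starConvex_slice_modelDomain (hP : ∀ z w : ℂ, ‖z‖ ≤ ‖w‖ → ‖w‖ < r → P z ≤ P w) (z : ℂ) :
    StarConvex ℝ 0 (Prod.mk z ⁻¹' modelDomain P r) := by
  refine starConvex_zero_iff.mpr fun w hzw a ha₀ ha₁ => ?_
  obtain ⟨hre, hz, hw⟩ : z.re + P w < 0 ∧ ‖z‖ < r ∧ ‖w‖ < r := hzw
  have hnorm : ‖a • w‖ ≤ ‖w‖ := by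
    rw [norm_smul, Real.norm_of_nonneg ha₀]
    exact mul_le_of_le_one_left (norm_nonneg w) ha₁
  exact ⟨(by linarith [hP _ _ hnorm hw] : z.re + P (a • w) < 0), hz, hnorm.trans_lt hw⟩

end ModelDomain

theorem stmt_9_general
    (P : ℂ → ℝ) (q : ℝ → ℝ) (ε₀ : ℝ)
    (hP : ContDiff ℝ (⊤ : ℕ∞) P)
    (hPq : ∀ z : ℂ, P z = q (‖z‖))
    (hq0 : q 0 = 0)
    (hqmono : StrictMonoOn q (Set.Ico 0 ε₀))
    (r : ℝ) (hr0 : 0 < r) (hrε₀ : r < ε₀)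
    (δ : ℝ) (g : ℂ × ℂ → ℂ)
    (hghol : DifferentiableOn ℂ g
      ({p : ℂ × ℂ | p.1.re + P p.2 < 0} ∩
        {p : ℂ × ℂ | ‖p.1‖ < r ∧ ‖p.2‖ < r}))
    (hgne : ∃ p ∈ {p : ℂ × ℂ | p.1.re + P p.2 < 0} ∩
        {p : ℂ × ℂ | ‖p.1‖ < r ∧ ‖p.2‖ < r}, g p ≠ 0)
    (hrot : ∀ p ∈ {p : ℂ × ℂ | p.1.re + P p.2 < 0} ∩
        {p : ℂ × ℂ | ‖p.1‖ < r ∧ ‖p.2‖ < r}, ∀ t : ℝ,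
      g p = Complex.exp (Complex.I * (δ : ℂ) * (t : ℂ)) *
        g (p.1, Complex.exp (Complex.I * (t : ℂ)) * p.2)) :
    ∃ n : ℕ, ∃ b : ℂ → ℂ,
      DifferentiableOn ℂ b {z : ℂ | z.re < 0 ∧ ‖z‖ < r} ∧
      (∃ z ∈ {z : ℂ | z.re < 0 ∧ ‖z‖ < r}, b z ≠ 0) ∧
      δ = -(n : ℝ) ∧
      ∀ p ∈ {p : ℂ × ℂ | p.1.re + P p.2 < 0} ∩
        {p : ℂ × ℂ | ‖p.1‖ < r ∧ ‖p.2‖ < r},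
        g p = b p.1 * p.2 ^ n := by
  have hP0 : P 0 = 0 := by rw [hPq, norm_zero, hq0]
  have hPmono : ∀ z w : ℂ, ‖z‖ ≤ ‖w‖ → ‖w‖ < r → P z ≤ P w := fun z w hzw hw => by
    rw [hPq, hPq]
    exact hqmono.monotoneOn ⟨norm_nonneg z, by linarith⟩ ⟨norm_nonneg w, by linarith⟩ hzw
  have hΩ : IsOpen (modelDomain P r) := isOpen_modelDomain hP.continuous
  have hstar := starConvex_slice_modelDomain hPmono
  obtain ⟨p₀, hp₀, hgp₀⟩ := hgne
  obtain ⟨n, rfl⟩ := exists_eq_neg_natCast_of_rotation hΩ hstar hghol hrot ⟨p₀, hp₀, hgp₀⟩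
  have hb := eq_mul_pow_of_rotation hΩ hstar hghol hrot rfl
  refine ⟨n, fun z => (n ! : ℂ)⁻¹ * iteratedDeriv n (fun w => g (z, w)) 0, fun z hz => ?_,
    ⟨p₀.1, ?_, left_ne_zero_of_mul (hb p₀ hp₀ ▸ hgp₀)⟩, rfl, hb⟩
  · exact (differentiableAt_of_eq_mul_pow hΩ hghol hb
      ((mk_zero_mem_modelDomain_iff hP0 hr0).mpr hz)).differentiableWithinAt
  · exact (mk_zero_mem_modelDomain_iff hP0 hr0).mp (mk_zero_mem_of_starConvex hstar hp₀)

theorem stmt_9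
    (P : ℂ → ℝ) (q : ℝ → ℝ) (ε₀ : ℝ)
    (hP : ContDiff ℝ (⊤ : ℕ∞) P)
    (hPq : ∀ z : ℂ, P z = q (‖z‖))
    (hq0 : q 0 = 0) (hε₀ : 0 < ε₀)
    (hqmono : StrictMonoOn q (Set.Ico 0 ε₀))
    (hqconv : ConvexOn ℝ (Set.Ico 0 ε₀) q)
    (hflat : ∀ n : ℕ, Filter.Tendsto (fun z : ℂ => P z / ‖z‖ ^ n)
      (nhdsWithin 0 {0}ᶜ) (nhds 0))
    (r : ℝ) (hr0 : 0 < r) (hrε₀ : r < ε₀)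
    (δ : ℝ) (g : ℂ × ℂ → ℂ)
    (hghol : DifferentiableOn ℂ g
      ({p : ℂ × ℂ | p.1.re + P p.2 < 0} ∩
        {p : ℂ × ℂ | ‖p.1‖ < r ∧ ‖p.2‖ < r}))
    (hgne : ∃ p ∈ {p : ℂ × ℂ | p.1.re + P p.2 < 0} ∩
        {p : ℂ × ℂ | ‖p.1‖ < r ∧ ‖p.2‖ < r}, g p ≠ 0)
    (hrot : ∀ p ∈ {p : ℂ × ℂ | p.1.re + P p.2 < 0} ∩
        {p : ℂ × ℂ | ‖p.1‖ < r ∧ ‖p.2‖ < r}, ∀ t : ℝ,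
      g p = Complex.exp (Complex.I * (δ : ℂ) * (t : ℂ)) *
        g (p.1, Complex.exp (Complex.I * (t : ℂ)) * p.2)) :
    ∃ n : ℕ, ∃ b : ℂ → ℂ,
      DifferentiableOn ℂ b {z : ℂ | z.re < 0 ∧ ‖z‖ < r} ∧
      (∃ z ∈ {z : ℂ | z.re < 0 ∧ ‖z‖ < r}, b z ≠ 0) ∧
      δ = -(n : ℝ) ∧
      ∀ p ∈ {p : ℂ × ℂ | p.1.re + P p.2 < 0} ∩
        {p : ℂ × ℂ | ‖p.1‖ < r ∧ ‖p.2‖ < r},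
        g p = b p.1 * p.2 ^ n :=
  stmt_9_general P q ε₀ hP hPq hq0 hqmono r hr0 hrε₀ δ g hghol hgne hrot
end

section
/- Let b be a complex-valued function defined on a neighborhood of 0 in ℂ with b(0) = 0, and suppose there exist C > 0 and η > 0 such that |b(w)| ≤ C|w| for all |w| < η. Then lim_{z→0} P(z·b(P(z)))/P(z) = 0, the limit being taken over z ≠ 0. -/
open Complex

/-!
Convexity of `q` with `q 0 = 0` gives `q (t * r) ≤ t * q r` for `t ∈ [0, 1]`. Since
`|z * b (P z)| ≤ C P(z) |z|` and `C P(z) ≤ 1` near `0`, this yields `P (z * b (P z)) ≤ C P(z)²`,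
so the quotient is squeezed between `0` and `C P(z) → 0`; the same inequality with `r` fixed
shows `P(z) → 0`.
-/

open Filter Topology Set

theorem ConvexOn.map_mul_le_of_map_zero {s : Set ℝ} {f : ℝ → ℝ} (hf : ConvexOn ℝ s f)
    (h0 : (0 : ℝ) ∈ s) (hf0 : f 0 = 0) {x t : ℝ} (hx : x ∈ s) (ht0 : 0 ≤ t) (ht1 : t ≤ 1) :
    f (t * x) ≤ t * f x := by
  simpa [hf0] using hf.2 hx h0 ht0 (sub_nonneg.2 ht1) (by ring)

section MonotoneConvex

variable {q : ℝ → ℝ} {ε : ℝ} (hmono : MonotoneOn q (Ico 0 ε)) (hconv : ConvexOn ℝ (Ico 0 ε) q)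
  (hq0 : q 0 = 0)
include hmono hconv hq0

theorem le_mul_of_monotoneOn_of_convexOn {x y t : ℝ} (hy : 0 ≤ y) (hyx : y ≤ t * x)
    (hx0 : 0 ≤ x) (hxε : x < ε) (ht0 : 0 ≤ t) (ht1 : t ≤ 1) :
    q y ≤ t * q x := by
  have htx : t * x ∈ Ico 0 ε :=
    ⟨by positivity, (mul_le_of_le_one_left hx0 ht1).trans_lt hxε⟩
  calc q y ≤ q (t * x) := hmono ⟨hy, hyx.trans_lt htx.2⟩ htx hyx
    _ ≤ t * q x :=
      hconv.map_mul_le_of_map_zero ⟨le_rfl, hx0.trans_lt hxε⟩ hq0 ⟨hx0, hxε⟩ ht0 ht1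

theorem tendsto_nhdsGT_zero_of_monotoneOn_of_convexOn (hε : 0 < ε) :
    Tendsto q (𝓝[>] 0) (𝓝 0) := by
  set r := ε / 2
  have hr : 0 < r := half_pos hε
  have hslope : Tendsto (fun x => x / r * q r) (𝓝[>] 0) (𝓝 0) := by
    simpa using ((continuous_id.div_const r).mul_const (q r)).tendsto' 0 _ (by simp)
      |>.mono_left nhdsWithin_le_nhds
  refine squeeze_zero' ?_ ?_ hslope <;>
    filter_upwards [Ioo_mem_nhdsGT hr] with x hx
  · exact hq0 ▸ hmono ⟨le_rfl, hε⟩ ⟨hx.1.le, hx.2.trans (half_lt_self hε)⟩ hx.1.le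
  · refine le_mul_of_monotoneOn_of_convexOn hmono hconv hq0 hx.1.le ?_ hr.le
      (half_lt_self hε) (div_nonneg hx.1.le hr.le) ((div_le_one hr).2 hx.2.le)
    rw [div_mul_cancel₀ x hr.ne']

theorem norm_mul_mem_Icc_of_monotoneOn_of_convexOn {z w : ℂ} {s : ℝ} (hz : ‖z‖ < ε)
    (hw : ‖w‖ ≤ s) (hs0 : 0 ≤ s) (hs1 : s ≤ 1) :
    q ‖z * w‖ ∈ Icc 0 (s * q ‖z‖) := by
  have hzw : ‖z * w‖ ≤ s * ‖z‖ := by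
    rw [norm_mul, mul_comm]; exact mul_le_mul_of_nonneg_right hw (norm_nonneg z)
  have hzwε : ‖z * w‖ < ε :=
    hzw.trans_lt ((mul_le_of_le_one_left (norm_nonneg z) hs1).trans_lt hz)
  refine ⟨hq0 ▸ hmono ⟨le_rfl, (norm_nonneg _).trans_lt hzwε⟩ ⟨norm_nonneg _, hzwε⟩
    (norm_nonneg _), ?_⟩
  exact le_mul_of_monotoneOn_of_convexOn hmono hconv hq0 (norm_nonneg _) hzw (norm_nonneg z)
    hz hs0 hs1

end MonotoneConvex

theorem stmt_10_general
    (P : ℂ → ℝ) (q : ℝ → ℝ) (ε₀ : ℝ)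
    (hPq : ∀ z : ℂ, P z = q ‖z‖)
    (hq0 : q 0 = 0) (hε₀ : 0 < ε₀)
    (hqmono : StrictMonoOn q (Set.Ico 0 ε₀))
    (hqconv : ConvexOn ℝ (Set.Ico 0 ε₀) q)
    (b : ℂ → ℂ)
    (C η : ℝ) (hC : 0 < C) (hη : 0 < η)
    (hb : ∀ w : ℂ, ‖w‖ < η → ‖b w‖ ≤ C * ‖w‖) :
    Filter.Tendsto (fun z : ℂ => P (z * b ((P z : ℂ))) / P z)
      (nhdsWithin 0 {0}ᶜ) (nhds 0) := by
  have hmono := hqmono.monotoneOn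
  have hP : Tendsto P (𝓝[≠] 0) (𝓝 0) := by
    rw [show P = q ∘ norm from funext hPq]
    exact (tendsto_nhdsGT_zero_of_monotoneOn_of_convexOn hmono hqconv hq0 hε₀).comp
      tendsto_norm_nhdsNE_zero
  have hCP : Tendsto (fun z => C * P z) (𝓝[≠] 0) (𝓝 0) := by simpa using hP.const_mul C
  have hbound : ∀ᶠ z in 𝓝[≠] 0, P (z * b (P z)) / P z ∈ Icc 0 (C * P z) := by
    filter_upwards [self_mem_nhdsWithin, (tendsto_norm_nhdsNE_zero.mono_right
      nhdsWithin_le_nhds).eventually_lt_const hε₀, hP.eventually_lt_const hη,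
      hCP.eventually_lt_const one_pos] with z (hz : z ≠ 0) hzε hPη hCP1
    have hPpos : 0 < P z :=
      hPq z ▸ hq0 ▸ hqmono ⟨le_rfl, hε₀⟩ ⟨norm_nonneg z, hzε⟩ (norm_pos_iff.2 hz)
    have hbP : ‖b (P z)‖ ≤ C * P z := by
      simpa [abs_of_pos hPpos] using hb (P z) (by simpa [abs_of_pos hPpos])
    have hquot := norm_mul_mem_Icc_of_monotoneOn_of_convexOn hmono hqconv hq0 hzε hbP
      (by positivity) hCP1.le
    rw [← hPq, ← hPq] at hquot
    exact ⟨div_nonneg hquot.1 hPpos.le, (div_le_iff₀ hPpos).2 hquot.2⟩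
  exact squeeze_zero' (hbound.mono fun _ h => h.1) (hbound.mono fun _ h => h.2) hCP

theorem stmt_10
    (P : ℂ → ℝ) (q : ℝ → ℝ) (ε₀ : ℝ)
    (hP : ContDiff ℝ (⊤ : ℕ∞) P)
    (hPq : ∀ z : ℂ, P z = q ‖z‖)
    (hq0 : q 0 = 0) (hε₀ : 0 < ε₀)
    (hqmono : StrictMonoOn q (Set.Ico 0 ε₀))
    (hqconv : ConvexOn ℝ (Set.Ico 0 ε₀) q)
    (hflat : ∀ n : ℕ, Filter.Tendsto (fun z : ℂ => P z / ‖z‖ ^ n)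
      (nhdsWithin 0 {0}ᶜ) (nhds 0))
    (b : ℂ → ℂ) (hb0 : b 0 = 0)
    (C η : ℝ) (hC : 0 < C) (hη : 0 < η)
    (hb : ∀ w : ℂ, ‖w‖ < η → ‖b w‖ ≤ C * ‖w‖) :
    Filter.Tendsto (fun z : ℂ => P (z * b ((P z : ℂ))) / P z)
      (nhdsWithin 0 {0}ᶜ) (nhds 0) :=
  stmt_10_general P q ε₀ hPq hq0 hε₀ hqmono hqconv b C η hC hη hb
end
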